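/- Let v = (R,P,Q) : ℝ⁴ → ℝ³ be C¹ in coordinates (u,z,x,y), periodic in x and y with period 1, satisfying 2R_u = P_x + Q_y + R_z, P_z = R_x, Q_z = R_y on the wedge u ≥ 0, z ≥ 0. Then for every T > 0, ∫_{u+z=T} (R² + P² + Q²) dz dx dy ≤ 2 ( ∫_{u=0, 0≤z≤T} R² dz dx dy + ∫_{z=0, 0≤u≤T} (P² + Q²) du dx dy ), where the x,y integrals are over one period cell. -/

import Mathlib

/-!
With `A = 2R²`, `B = P² + Q² - R²`, `C = 2RP`, `D = 2RQ`, the three equations give the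
conservation law `∂ᵤA + ∂_zB = ∂ₓC + ∂_yD` on the wedge. Integrating over the period cell in
`(x, y)` kills the right-hand side by periodicity, so the cell integrals `(a, b)` of `(A, B)`
form a divergence-free field in the `(u, z)` plane. Its flux through the boundary of the triangle
`u, z ≥ 0, u + z ≤ T` vanishes: `∫_{u+z=T} (a + b) = ∫_{u=0} a + ∫_{z=0} b`. Finally
`A + B = R² + P² + Q²` and `B ≤ P² + Q²`.
-/

open MeasureTheory Set Function intervalIntegral

noncomputable def pd (a : Fin 4) (f : (Fin 4 → ℝ) → ℝ) (x : Fin 4 → ℝ) : ℝ :=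
  fderiv ℝ f x (Pi.single a 1)

section PartialDerivative

variable {f : (Fin 4 → ℝ) → ℝ} (i : Fin 4)

lemma continuous_pd (hf : ContDiff ℝ 1 f) : Continuous (pd i f) :=
  (hf.continuous_fderiv one_ne_zero).clm_apply continuous_const

lemma integral_pd_comp_update (hf : ContDiff ℝ 1 f) (p : Fin 4 → ℝ) (a b : ℝ) :
    ∫ t in a..b, pd i f (update p i t) = f (update p i b) - f (update p i a) := by
  have hcont : Continuous fun t => pd i f (update p i t) :=
    (continuous_pd i hf).comp (continuous_const.update i continuous_id)
  exact integral_eq_sub_of_hasDerivAt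
    (fun t _ => (hf.differentiable one_ne_zero _).hasFDerivAt.comp_hasDerivAt t
      (hasDerivAt_update p i t)) (hcont.intervalIntegrable a b)

lemma integral_pd_comp_update_eq_zero_of_periodic (hf : ContDiff ℝ 1 f)
    (hper : ∀ q, f (update q i (q i + 1)) = f q) (p : Fin 4 → ℝ) (a : ℝ) :
    ∫ t in a..a + 1, pd i f (update p i t) = 0 := by
  rw [integral_pd_comp_update i hf, ← hper (update p i a), update_self, update_idem, sub_self]

end PartialDerivative

lemma intervalIntegral_swap_of_continuous {F : ℝ → ℝ → ℝ} (hF : Continuous (uncurry F))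
    (a b c d : ℝ) :
    ∫ x in a..b, ∫ y in c..d, F x y = ∫ y in c..d, ∫ x in a..b, F x y :=
  intervalIntegral_intervalIntegral_swap <|
    (hF.continuousOn.integrableOn_compact (isCompact_uIcc.prod isCompact_uIcc)).mono_set
      (prod_mono uIoc_subset_uIcc uIoc_subset_uIcc)

def triangle (T : ℝ) : Set (ℝ × ℝ) := {q | 0 < q.1 ∧ 0 < q.2 ∧ q.1 + q.2 ≤ T}

lemma measurableSet_triangle (T : ℝ) : MeasurableSet (triangle T) :=
  (measurableSet_lt measurable_const measurable_fst).inter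
    ((measurableSet_lt measurable_const measurable_snd).inter
      (measurableSet_le (measurable_fst.add measurable_snd) measurable_const))

lemma triangle_subset_Icc (T : ℝ) : triangle T ⊆ Icc (0, 0) (T, T) :=
  fun _ ⟨hu, hz, huz⟩ => ⟨⟨hu.le, hz.le⟩, ⟨by linarith, by linarith⟩⟩

lemma swap_mem_triangle {T u z : ℝ} : (z, u) ∈ triangle T ↔ (u, z) ∈ triangle T := by
  simp only [triangle, mem_ofPred_eq, and_left_comm, add_comm]

lemma integral_indicator_triangle (h : ℝ → ℝ → ℝ) (T x : ℝ) :
    ∫ y, (triangle T).indicator (uncurry h) (x, y)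
      = (Ioc 0 T).indicator (fun x => ∫ y in 0..T - x, h x y) x := by
  by_cases hx : x ∈ Ioc 0 T
  · rw [indicator_of_mem hx, integral_of_le (sub_nonneg.2 hx.2),
      ← MeasureTheory.integral_indicator measurableSet_Ioc]
    congr 1 with y
    simp only [triangle, indicator, mem_Ioc, mem_ofPred_eq, hx.1, true_and,
      le_sub_iff_add_le', uncurry_apply_pair]
  · have hzero : ∀ y, (triangle T).indicator (uncurry h) (x, y) = 0 :=
      fun y => indicator_of_notMem (s := triangle T)
        (fun (hxy : 0 < x ∧ 0 < y ∧ x + y ≤ T) => hx ⟨hxy.1, by linarith [hxy.2.1, hxy.2.2]⟩) _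
    simp only [indicator_of_notMem hx, hzero, MeasureTheory.integral_zero]

lemma indicator_triangle_swap (g : ℝ → ℝ → ℝ) (T u z : ℝ) :
    (triangle T).indicator (uncurry g) (u, z)
      = (triangle T).indicator (uncurry fun z u => g u z) (z, u) := by
  by_cases h : (u, z) ∈ triangle T
  · rw [indicator_of_mem h, indicator_of_mem (swap_mem_triangle.2 h)]; rfl
  · rw [indicator_of_notMem h, indicator_of_notMem (mt swap_mem_triangle.1 h)]

lemma integral_triangle_swap {g : ℝ → ℝ → ℝ} (hg : Continuous (uncurry g)) {T : ℝ}
    (hT : 0 ≤ T) :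
    ∫ z in 0..T, ∫ u in 0..T - z, g u z = ∫ u in 0..T, ∫ z in 0..T - u, g u z := by
  have hint : Integrable ((triangle T).indicator (uncurry g)) (volume.prod volume) :=
    ((hg.continuousOn.integrableOn_compact isCompact_Icc).mono_set
      (triangle_subset_Icc T)).integrable_indicator (measurableSet_triangle T)
  calc ∫ z in 0..T, ∫ u in 0..T - z, g u z
      = ∫ z, ∫ u, (triangle T).indicator (uncurry g) (u, z) := by
        simp only [indicator_triangle_swap g, integral_indicator_triangle,
          MeasureTheory.integral_indicator measurableSet_Ioc, integral_of_le hT]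
    _ = ∫ u, ∫ z, (triangle T).indicator (uncurry g) (u, z) :=
        (integral_integral_swap
          (f := fun u z => (triangle T).indicator (uncurry g) (u, z)) hint).symm
    _ = ∫ u in 0..T, ∫ z in 0..T - u, g u z := by
        simp only [integral_indicator_triangle,
          MeasureTheory.integral_indicator measurableSet_Ioc, integral_of_le hT]

/-- `hau` and `hbz` say `∂ᵤa = α = -∂_z b`, so `(a, b)` is divergence free and this is the
vanishing of its flux through the boundary of `triangle T`. -/
lemma integral_slant_eq {a b α : ℝ → ℝ → ℝ} (ha : Continuous (uncurry a))
    (hb : Continuous (uncurry b)) (hα : Continuous (uncurry α)) {T : ℝ} (hT : 0 ≤ T)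
    (hau : ∀ u z, 0 ≤ u → 0 ≤ z → a u z = a 0 z + ∫ s in 0..u, α s z)
    (hbz : ∀ u z, 0 ≤ u → 0 ≤ z → b u z = b u 0 - ∫ s in 0..z, α u s) :
    ∫ z in 0..T, (a (T - z) z + b (T - z) z) = (∫ z in 0..T, a 0 z) + ∫ u in 0..T, b u 0 := by
  have hslant_a : ∫ z in 0..T, a (T - z) z
      = (∫ z in 0..T, a 0 z) + ∫ z in 0..T, ∫ s in 0..T - z, α s z := by
    rw [← integral_add ((by fun_prop : Continuous fun z => a 0 z).intervalIntegrable _ _)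
      ((by fun_prop : Continuous fun z => ∫ s in 0..T - z, α s z).intervalIntegrable _ _)]
    refine integral_congr fun z hz => ?_
    rw [uIcc_of_le hT] at hz
    exact hau _ _ (sub_nonneg.2 hz.2) hz.1
  have hslant_b : ∫ u in 0..T, b u (T - u)
      = (∫ u in 0..T, b u 0) - ∫ u in 0..T, ∫ s in 0..T - u, α u s := by
    rw [← integral_sub ((by fun_prop : Continuous fun u => b u 0).intervalIntegrable _ _)
      ((by fun_prop : Continuous fun u => ∫ s in 0..T - u, α u s).intervalIntegrable _ _)]
    refine integral_congr fun u hu => ?_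
    rw [uIcc_of_le hT] at hu
    exact hbz _ _ hu.1 (sub_nonneg.2 hu.2)
  have hreflect : ∫ z in 0..T, b (T - z) z = ∫ u in 0..T, b u (T - u) := by
    simpa using integral_comp_sub_left (a := 0) (b := T) (fun u => b u (T - u)) T
  rw [integral_add ((by fun_prop : Continuous fun z => a (T - z) z).intervalIntegrable _ _)
    ((by fun_prop : Continuous fun z => b (T - z) z).intervalIntegrable _ _),
    hslant_a, hreflect, hslant_b, integral_triangle_swap hα hT]
  ring

noncomputable def squareIntegral (F : ℝ → ℝ → ℝ) : ℝ :=
  ∫ x in (0 : ℝ)..1, ∫ y in (0 : ℝ)..1, F x y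

section SquareIntegral

variable {F G : ℝ → ℝ → ℝ}

@[fun_prop]
lemma continuous_squareIntegral {X : Type*} [TopologicalSpace X] {F : X → ℝ → ℝ → ℝ}
    (hF : Continuous fun q : X × ℝ × ℝ => F q.1 q.2.1 q.2.2) :
    Continuous fun a => squareIntegral (F a) := by
  unfold squareIntegral
  fun_prop

lemma intervalIntegrable_integral_of_continuous (hF : Continuous (uncurry F)) (a b c d : ℝ) :
    IntervalIntegrable (fun x => ∫ y in c..d, F x y) volume a b :=
  (continuous_parametric_intervalIntegral_of_continuous' hF c d).intervalIntegrable a b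

lemma squareIntegral_add (hF : Continuous (uncurry F)) (hG : Continuous (uncurry G)) :
    squareIntegral (fun x y => F x y + G x y) = squareIntegral F + squareIntegral G := by
  unfold squareIntegral
  rw [← integral_add (intervalIntegrable_integral_of_continuous hF _ _ _ _)
    (intervalIntegrable_integral_of_continuous hG _ _ _ _)]
  exact integral_congr fun x _ => integral_add ((hF.uncurry_left x).intervalIntegrable _ _)
    ((hG.uncurry_left x).intervalIntegrable _ _)

lemma squareIntegral_sub (hF : Continuous (uncurry F)) (hG : Continuous (uncurry G)) :
    squareIntegral (fun x y => F x y - G x y) = squareIntegral F - squareIntegral G := by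
  unfold squareIntegral
  rw [← integral_sub (intervalIntegrable_integral_of_continuous hF _ _ _ _)
    (intervalIntegrable_integral_of_continuous hG _ _ _ _)]
  exact integral_congr fun x _ => integral_sub ((hF.uncurry_left x).intervalIntegrable _ _)
    ((hG.uncurry_left x).intervalIntegrable _ _)

lemma squareIntegral_const_mul (c : ℝ) (F : ℝ → ℝ → ℝ) :
    squareIntegral (fun x y => c * F x y) = c * squareIntegral F := by
  simp only [squareIntegral, intervalIntegral.integral_const_mul]

lemma squareIntegral_nonneg (h : ∀ x y, 0 ≤ F x y) : 0 ≤ squareIntegral F :=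
  integral_nonneg zero_le_one fun x _ => integral_nonneg zero_le_one fun y _ => h x y

lemma squareIntegral_mono (hF : Continuous (uncurry F)) (hG : Continuous (uncurry G))
    (h : ∀ x y, F x y ≤ G x y) : squareIntegral F ≤ squareIntegral G :=
  integral_mono_on zero_le_one (intervalIntegrable_integral_of_continuous hF _ _ _ _)
    (intervalIntegrable_integral_of_continuous hG _ _ _ _)
    fun x _ => integral_mono_on zero_le_one ((hF.uncurry_left x).intervalIntegrable _ _)
      ((hG.uncurry_left x).intervalIntegrable _ _) fun y _ => h x y

lemma integral_squareIntegral_comm {F : ℝ → ℝ → ℝ → ℝ}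
    (hF : Continuous fun q : ℝ × ℝ × ℝ => F q.1 q.2.1 q.2.2) (a b : ℝ) :
    ∫ t in a..b, squareIntegral (F t) = squareIntegral fun x y => ∫ t in a..b, F t x y := by
  unfold squareIntegral
  rw [intervalIntegral_swap_of_continuous (F := fun t x => ∫ y in (0 : ℝ)..1, F t x y)
    (by fun_prop)]
  exact integral_congr fun x _ => intervalIntegral_swap_of_continuous (by fun_prop) _ _ _ _

end SquareIntegral

/-- Points are `![u, z, x, y]`, so `pd 0`, `pd 1`, `pd 2`, `pd 3` are `∂ᵤ`, `∂_z`, `∂ₓ`, `∂_y`. -/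
noncomputable def cellIntegral (f : (Fin 4 → ℝ) → ℝ) (u z : ℝ) : ℝ :=
  squareIntegral fun x y => f ![u, z, x, y]

section CellIntegral

variable {f : (Fin 4 → ℝ) → ℝ}

@[fun_prop]
lemma Continuous.cellIntegral {X : Type*} [TopologicalSpace X] {u z : X → ℝ} (hf : Continuous f)
    (hu : Continuous u) (hz : Continuous z) : Continuous fun a => cellIntegral f (u a) (z a) := by
  unfold _root_.cellIntegral
  fun_prop

lemma cellIntegral_add {g : (Fin 4 → ℝ) → ℝ} (hf : Continuous f) (hg : Continuous g)
    (u z : ℝ) : cellIntegral (f + g) u z = cellIntegral f u z + cellIntegral g u z :=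
  squareIntegral_add (by fun_prop) (by fun_prop)

lemma cellIntegral_pd_two_eq_zero (hf : ContDiff ℝ 1 f)
    (hper : ∀ q, f (update q 2 (q 2 + 1)) = f q) (u z : ℝ) : cellIntegral (pd 2 f) u z = 0 := by
  have hline : ∀ y, ∫ x in (0 : ℝ)..1, pd 2 f ![u, z, x, y] = 0 := fun y => by
    have hupd : ∀ t, update ![u, z, 0, y] 2 t = ![u, z, t, y] := fun t => by
      ext j; fin_cases j <;> rfl
    simpa only [hupd, zero_add] using
      integral_pd_comp_update_eq_zero_of_periodic 2 hf hper ![u, z, 0, y] 0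
  have := continuous_pd 2 hf
  rw [cellIntegral, squareIntegral, intervalIntegral_swap_of_continuous (by fun_prop)]
  simp only [hline, intervalIntegral.integral_zero]

lemma cellIntegral_pd_three_eq_zero (hf : ContDiff ℝ 1 f)
    (hper : ∀ q, f (update q 3 (q 3 + 1)) = f q) (u z : ℝ) : cellIntegral (pd 3 f) u z = 0 := by
  have hline : ∀ x, ∫ y in (0 : ℝ)..1, pd 3 f ![u, z, x, y] = 0 := fun x => by
    have hupd : ∀ t, update ![u, z, x, 0] 3 t = ![u, z, x, t] := fun t => by
      ext j; fin_cases j <;> rfl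
    simpa only [hupd, zero_add] using
      integral_pd_comp_update_eq_zero_of_periodic 3 hf hper ![u, z, x, 0] 0
  simp only [cellIntegral, squareIntegral, hline, intervalIntegral.integral_zero]

lemma integral_cellIntegral_pd_zero (hf : ContDiff ℝ 1 f) (z a b : ℝ) :
    ∫ u in a..b, cellIntegral (pd 0 f) u z = cellIntegral f b z - cellIntegral f a z := by
  have := continuous_pd 0 hf
  have := hf.continuous
  have hline : ∀ x y, ∫ u in a..b, pd 0 f ![u, z, x, y] = f ![b, z, x, y] - f ![a, z, x, y] :=
    fun x y => by
      have hupd : ∀ t, update ![0, z, x, y] 0 t = ![t, z, x, y] := fun t => by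
        ext j; fin_cases j <;> rfl
      simpa only [hupd] using integral_pd_comp_update 0 hf ![0, z, x, y] a b
  unfold cellIntegral
  rw [integral_squareIntegral_comm (F := fun u x y => pd 0 f ![u, z, x, y]) (by fun_prop),
    ← squareIntegral_sub (by fun_prop) (by fun_prop)]
  simp only [hline]

lemma integral_cellIntegral_pd_one (hf : ContDiff ℝ 1 f) (u a b : ℝ) :
    ∫ z in a..b, cellIntegral (pd 1 f) u z = cellIntegral f u b - cellIntegral f u a := by
  have := continuous_pd 1 hf
  have := hf.continuous
  have hline : ∀ x y, ∫ z in a..b, pd 1 f ![u, z, x, y] = f ![u, b, x, y] - f ![u, a, x, y] :=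
    fun x y => by
      have hupd : ∀ t, update ![u, 0, x, y] 1 t = ![u, t, x, y] := fun t => by
        ext j; fin_cases j <;> rfl
      simpa only [hupd] using integral_pd_comp_update 1 hf ![u, 0, x, y] a b
  unfold cellIntegral
  rw [integral_squareIntegral_comm (F := fun z x y => pd 1 f ![u, z, x, y]) (by fun_prop),
    ← squareIntegral_sub (by fun_prop) (by fun_prop)]
  simp only [hline]

end CellIntegral

section Conservation

variable {A B C D : (Fin 4 → ℝ) → ℝ}

lemma cellIntegral_pd_zero_add_pd_one_eq_zero (hA : ContDiff ℝ 1 A) (hB : ContDiff ℝ 1 B)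
    (hC : ContDiff ℝ 1 C) (hD : ContDiff ℝ 1 D) (hCper : ∀ q, C (update q 2 (q 2 + 1)) = C q)
    (hDper : ∀ q, D (update q 3 (q 3 + 1)) = D q)
    (hdiv : ∀ p : Fin 4 → ℝ, 0 ≤ p 0 → 0 ≤ p 1 → pd 0 A p + pd 1 B p = pd 2 C p + pd 3 D p)
    {u z : ℝ} (hu : 0 ≤ u) (hz : 0 ≤ z) :
    cellIntegral (pd 0 A) u z + cellIntegral (pd 1 B) u z = 0 := by
  have hcell : cellIntegral (pd 0 A + pd 1 B) u z = cellIntegral (pd 2 C + pd 3 D) u z :=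
    congrArg squareIntegral (funext₂ fun x y => hdiv ![u, z, x, y] hu hz)
  rwa [cellIntegral_add (continuous_pd 0 hA) (continuous_pd 1 hB),
    cellIntegral_add (continuous_pd 2 hC) (continuous_pd 3 hD),
    cellIntegral_pd_two_eq_zero hC hCper, cellIntegral_pd_three_eq_zero hD hDper,
    add_zero] at hcell

lemma integral_cellIntegral_slant_eq (hA : ContDiff ℝ 1 A) (hB : ContDiff ℝ 1 B)
    (hC : ContDiff ℝ 1 C) (hD : ContDiff ℝ 1 D) (hCper : ∀ q, C (update q 2 (q 2 + 1)) = C q)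
    (hDper : ∀ q, D (update q 3 (q 3 + 1)) = D q)
    (hdiv : ∀ p : Fin 4 → ℝ, 0 ≤ p 0 → 0 ≤ p 1 → pd 0 A p + pd 1 B p = pd 2 C p + pd 3 D p)
    {T : ℝ} (hT : 0 ≤ T) :
    ∫ z in 0..T, (cellIntegral A (T - z) z + cellIntegral B (T - z) z)
      = (∫ z in 0..T, cellIntegral A 0 z) + ∫ u in 0..T, cellIntegral B u 0 := by
  have := hA.continuous
  have := hB.continuous
  have := continuous_pd 0 hA
  refine integral_slant_eq (a := cellIntegral A) (b := cellIntegral B)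
    (α := cellIntegral (pd 0 A)) (by fun_prop) (by fun_prop) (by fun_prop) hT
    (fun u z _ _ => by rw [integral_cellIntegral_pd_zero hA]; ring)
    (fun u z hu hz => ?_)
  have hflux : ∫ s in 0..z, cellIntegral (pd 0 A) u s
      = -∫ s in 0..z, cellIntegral (pd 1 B) u s := by
    rw [← intervalIntegral.integral_neg]
    refine integral_congr fun s hs => ?_
    rw [uIcc_of_le hz] at hs
    exact eq_neg_of_add_eq_zero_left
      (cellIntegral_pd_zero_add_pd_one_eq_zero hA hB hC hD hCper hDper hdiv hu hs.1)
  rw [hflux, integral_cellIntegral_pd_one hB]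
  ring

end Conservation

lemma energy_divergence_identity {R P Q : (Fin 4 → ℝ) → ℝ} {p : Fin 4 → ℝ}
    (hR : DifferentiableAt ℝ R p) (hP : DifferentiableAt ℝ P p) (hQ : DifferentiableAt ℝ Q p)
    (h₁ : 2 * pd 0 R p = pd 2 P p + pd 3 Q p + pd 1 R p)
    (h₂ : pd 1 P p = pd 2 R p) (h₃ : pd 1 Q p = pd 3 R p) :
    pd 0 (fun q => 2 * R q ^ 2) p + pd 1 (fun q => P q ^ 2 + Q q ^ 2 - R q ^ 2) p
      = pd 2 (fun q => 2 * (R q * P q)) p + pd 3 (fun q => 2 * (R q * Q q)) p := by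
  simp only [pd] at *
  simp (disch := fun_prop) only [fderiv_fun_mul, fderiv_fun_pow, fderiv_fun_add,
    fderiv_fun_sub, fderiv_fun_const, Nat.add_one_sub_one, pow_one, nsmul_eq_mul,
    Nat.cast_ofNat, Pi.zero_apply, smul_zero, add_zero, smul_apply, smul_eq_mul,
    sub_apply, add_apply, smul_add]
  linear_combination (2 * R p) * h₁ + (2 * P p) * h₂ + (2 * Q p) * h₃

lemma integral_energy_slant_eq {R P Q : (Fin 4 → ℝ) → ℝ}
    (hR : ContDiff ℝ 1 R) (hP : ContDiff ℝ 1 P) (hQ : ContDiff ℝ 1 Q)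
    (hRx : ∀ p, R (update p 2 (p 2 + 1)) = R p) (hPx : ∀ p, P (update p 2 (p 2 + 1)) = P p)
    (hRy : ∀ p, R (update p 3 (p 3 + 1)) = R p) (hQy : ∀ p, Q (update p 3 (p 3 + 1)) = Q p)
    (e1 : ∀ p : Fin 4 → ℝ, 0 ≤ p 0 → 0 ≤ p 1 →
      2 * pd 0 R p = pd 2 P p + pd 3 Q p + pd 1 R p)
    (e2 : ∀ p : Fin 4 → ℝ, 0 ≤ p 0 → 0 ≤ p 1 → pd 1 P p = pd 2 R p)
    (e3 : ∀ p : Fin 4 → ℝ, 0 ≤ p 0 → 0 ≤ p 1 → pd 1 Q p = pd 3 R p) {T : ℝ} (hT : 0 ≤ T) :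
    ∫ z in 0..T, cellIntegral (fun q => R q ^ 2 + P q ^ 2 + Q q ^ 2) (T - z) z
      = 2 * (∫ z in 0..T, cellIntegral (fun q => R q ^ 2) 0 z)
        + ∫ u in 0..T, cellIntegral (fun q => P q ^ 2 + Q q ^ 2 - R q ^ 2) u 0 := by
  have := hR.continuous
  have := hP.continuous
  have := hQ.continuous
  have hslant : ∀ z, cellIntegral (fun q => R q ^ 2 + P q ^ 2 + Q q ^ 2) (T - z) z
      = cellIntegral (fun q => 2 * R q ^ 2) (T - z) z
        + cellIntegral (fun q => P q ^ 2 + Q q ^ 2 - R q ^ 2) (T - z) z := fun z => by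
    rw [← cellIntegral_add (by fun_prop) (by fun_prop)]
    congr 1 with q
    simp only [Pi.add_apply]
    ring
  have hR_data : ∫ z in 0..T, cellIntegral (fun q => 2 * R q ^ 2) 0 z
      = 2 * ∫ z in 0..T, cellIntegral (fun q => R q ^ 2) 0 z := by
    simp only [cellIntegral, squareIntegral_const_mul, intervalIntegral.integral_const_mul]
  rw [← hR_data]
  simp only [hslant]
  exact integral_cellIntegral_slant_eq (by fun_prop) (by fun_prop) (by fun_prop) (by fun_prop)
    (fun q => by simp only [hRx q, hPx q]) (fun q => by simp only [hRy q, hQy q])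
    (fun p hu hz => energy_divergence_identity (hR.differentiable one_ne_zero p)
      (hP.differentiable one_ne_zero p) (hQ.differentiable one_ne_zero p)
      (e1 p hu hz) (e2 p hu hz) (e3 p hu hz)) hT

/-- Energy estimate for the null-plane characteristic problem of the wave
equation. Coordinates `(u,z,x,y)` are indices `0,1,2,3`; the fields are C¹,
periodic in `x,y` with period 1, and satisfy `2R_u = P_x + Q_y + R_z`,
`P_z = R_x`, `Q_z = R_y` on the wedge `u ≥ 0, z ≥ 0`. Then for every `T > 0`
the energy on `{u + z = T}` is bounded by twice the data integrals on
`{u = 0}` and `{z = 0}`. -/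
theorem stmt_10 (R P Q : (Fin 4 → ℝ) → ℝ)
    (hR : ContDiff ℝ 1 R) (hP : ContDiff ℝ 1 P) (hQ : ContDiff ℝ 1 Q)
    (hperx : ∀ p : Fin 4 → ℝ, R (Function.update p 2 (p 2 + 1)) = R p ∧
      P (Function.update p 2 (p 2 + 1)) = P p ∧
      Q (Function.update p 2 (p 2 + 1)) = Q p)
    (hpery : ∀ p : Fin 4 → ℝ, R (Function.update p 3 (p 3 + 1)) = R p ∧
      P (Function.update p 3 (p 3 + 1)) = P p ∧
      Q (Function.update p 3 (p 3 + 1)) = Q p)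
    (e1 : ∀ p : Fin 4 → ℝ, 0 ≤ p 0 → 0 ≤ p 1 →
      2 * pd 0 R p = pd 2 P p + pd 3 Q p + pd 1 R p)
    (e2 : ∀ p : Fin 4 → ℝ, 0 ≤ p 0 → 0 ≤ p 1 → pd 1 P p = pd 2 R p)
    (e3 : ∀ p : Fin 4 → ℝ, 0 ≤ p 0 → 0 ≤ p 1 → pd 1 Q p = pd 3 R p) :
    ∀ T : ℝ, 0 < T →
      (∫ z in (0:ℝ)..T, ∫ x in (0:ℝ)..1, ∫ y in (0:ℝ)..1,
        (R ![T - z, z, x, y] ^ 2 + P ![T - z, z, x, y] ^ 2 +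
          Q ![T - z, z, x, y] ^ 2))
      ≤ 2 * ((∫ z in (0:ℝ)..T, ∫ x in (0:ℝ)..1, ∫ y in (0:ℝ)..1,
            R ![0, z, x, y] ^ 2)
          + (∫ u in (0:ℝ)..T, ∫ x in (0:ℝ)..1, ∫ y in (0:ℝ)..1,
            (P ![u, 0, x, y] ^ 2 + Q ![u, 0, x, y] ^ 2))) := by
  intro T hT
  have := hP.continuous
  have := hQ.continuous
  have hdata : ∫ u in (0:ℝ)..T, cellIntegral (fun q => P q ^ 2 + Q q ^ 2 - R q ^ 2) u 0
      ≤ ∫ u in (0:ℝ)..T, cellIntegral (fun q => P q ^ 2 + Q q ^ 2) u 0 :=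
    integral_mono_on hT.le (Continuous.intervalIntegrable (by fun_prop) _ _)
      (Continuous.intervalIntegrable (by fun_prop) _ _) fun u _ =>
        squareIntegral_mono (by fun_prop) (by fun_prop) fun x y => sub_le_self _ (sq_nonneg _)
  have hdata_nonneg : 0 ≤ ∫ u in (0:ℝ)..T, cellIntegral (fun q => P q ^ 2 + Q q ^ 2) u 0 :=
    integral_nonneg hT.le fun u _ => squareIntegral_nonneg fun x y => by positivity
  calc _ = _ := integral_energy_slant_eq hR hP hQ (fun p => (hperx p).1)
        (fun p => (hperx p).2.1) (fun p => (hpery p).1) (fun p => (hpery p).2.2) e1 e2 e3 hT.le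
    _ ≤ 2 * ((∫ z in (0:ℝ)..T, cellIntegral (fun q => R q ^ 2) 0 z)
          + ∫ u in (0:ℝ)..T, cellIntegral (fun q => P q ^ 2 + Q q ^ 2) u 0) := by
        linarith
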